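/- arXiv:math/0510457 — 2 statements merged into one kernel-verified Lean document; each statement's English description precedes it below -/
import Mathlib

section
/- Let λ be an r-partition of n with (λ,1) ∈ Ω (i.e., there exists an r-composition μ with 𝐚(λ) > 𝐚(μ)), let l be the smallest index with |λ^(l)| ≠ 0, and define λ† by λ†^(l) = (1^{|λ^(l)|−1}), λ†^(l+1) = (1^{|λ^(l+1)|+1}), λ†^(j) = (1^{|λ^(j)|}) for j ≠ l, l+1. Then λ† is an r-partition of n and 𝐚(λ) > 𝐚(λ†). -/
/-- An `r`-composition: an `r`-tuple of compositions (finite sequences of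
non-negative integers), the `i`-th component being the list of parts of `λ^(i)`. -/
abbrev MultiComp (r : ℕ) := Fin r → List ℕ

namespace MultiComp

variable {r : ℕ}

/-- `|λ^(i)|`, the size of the `i`-th component. -/
def sizeAt (lam : MultiComp r) (i : Fin r) : ℕ := (lam i).sum

/-- `|λ| = |λ^(1)| + ⋯ + |λ^(r)|`. -/
def totalSize (lam : MultiComp r) : ℕ := ∑ i, lam.sizeAt i

/-- `𝐚(λ) = (a_1, …, a_r)` with `a_i = Σ_{k < i} |λ^(k)|`. -/
def avec (lam : MultiComp r) (i : Fin r) : ℕ := ∑ k ∈ Finset.Iio i, lam.sizeAt k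

/-- The type `α(λ) = (|λ^(1)|, …, |λ^(r)|)` of an `r`-composition. -/
def alphaType (lam : MultiComp r) : Fin r → ℕ := lam.sizeAt

/-- The dominance order `λ ⊵ μ` on `r`-compositions:
`Σ_{c=1}^{s−1}|λ^(c)| + Σ_{j=1}^{i} λ_j^(s) ≥ Σ_{c=1}^{s−1}|μ^(c)| + Σ_{j=1}^{i} μ_j^(s)`
for all `1 ≤ s ≤ r` and all `i`. -/
def Dominates (lam mu : MultiComp r) : Prop :=
  ∀ (s : Fin r) (i : ℕ),
    mu.avec s + ((mu s).take i).sum ≤ lam.avec s + ((lam s).take i).sum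

/-- An `r`-partition: every component is weakly decreasing. -/
def IsMultiPartition (lam : MultiComp r) : Prop :=
  ∀ i : Fin r, (lam i).Pairwise (· ≥ ·)

/-- `𝐚(λ) > 𝐚(μ)`: componentwise `≥` and not equal. -/
def AvecGT (lam mu : MultiComp r) : Prop :=
  (∀ i, mu.avec i ≤ lam.avec i) ∧ lam.avec ≠ mu.avec

end MultiComp

/-! `λ†` has the same component sizes as `λ`, except that one box has moved from component `l`
to component `l + 1`. Hence `|λ†| = |λ|` and `a_s(λ†) + [l < s] = a_s(λ) + [l + 1 < s]`, so
`a_s(λ†) ≤ a_s(λ)` for every `s`, with strict inequality at `s = l + 1`. Each component of `λ†`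
is a single column `(1^m)`, hence a partition. -/

namespace MultiComp

variable {r : ℕ}

/-- `μ` arises from `λ` by moving one box from component `i` to component `j`. -/
def BoxMove (lam mu : MultiComp r) (i j : Fin r) : Prop :=
  ∀ k, mu.sizeAt k + (Pi.single i 1 : Fin r → ℕ) k =
    lam.sizeAt k + (Pi.single j 1 : Fin r → ℕ) k

namespace BoxMove

variable {lam mu : MultiComp r} {i j : Fin r}

theorem sum_sizeAt_add (h : BoxMove lam mu i j) (s : Finset (Fin r)) :
    ∑ k ∈ s, mu.sizeAt k + (if i ∈ s then 1 else 0) =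
      ∑ k ∈ s, lam.sizeAt k + (if j ∈ s then 1 else 0) := by
  unfold BoxMove at h
  simpa [Finset.sum_add_distrib] using Finset.sum_congr rfl fun k (_ : k ∈ s) => h k

theorem totalSize_eq (h : BoxMove lam mu i j) : mu.totalSize = lam.totalSize := by
  simpa [totalSize] using h.sum_sizeAt_add Finset.univ

theorem avec_add (h : BoxMove lam mu i j) (s : Fin r) :
    mu.avec s + (if i < s then 1 else 0) = lam.avec s + (if j < s then 1 else 0) := by
  simpa [avec] using h.sum_sizeAt_add (Finset.Iio s)

theorem avecGT (h : BoxMove lam mu i j) (hij : i < j) : lam.AvecGT mu := by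
  refine ⟨fun s => ?_, fun heq => ?_⟩
  · have hs := h.avec_add s
    have : j < s → i < s := hij.trans
    split_ifs at hs <;> omega
  · simpa [hij, congrFun heq j] using h.avec_add j

end BoxMove

end MultiComp

open MultiComp

theorem boxMove_dagger {r : ℕ} {lam dag : MultiComp r} {l : Fin r} (hl : lam.sizeAt l ≠ 0)
    (hl1 : (l : ℕ) + 1 < r)
    (hdag : ∀ j : Fin r,
      dag j =
        if j = l then List.replicate (lam.sizeAt l - 1) 1
        else if (j : ℕ) = (l : ℕ) + 1 then List.replicate (lam.sizeAt j + 1) 1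
        else List.replicate (lam.sizeAt j) 1) :
    BoxMove lam dag l ⟨l + 1, hl1⟩ := by
  unfold BoxMove
  intro k
  rcases eq_or_ne k l with rfl | hkl
  · have hne : k ≠ ⟨k + 1, hl1⟩ := Fin.ne_of_val_ne (Nat.succ_ne_self k).symm
    simp only [sizeAt, hdag, if_true, List.sum_replicate, smul_eq_mul, mul_one,
      Pi.single_eq_same, Pi.single_eq_of_ne hne]
    exact Nat.sub_add_cancel (Nat.one_le_iff_ne_zero.2 hl)
  by_cases hk : (k : ℕ) = l + 1
  · obtain rfl : k = ⟨l + 1, hl1⟩ := Fin.ext hk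
    simp [sizeAt, hdag, hkl]
  · have hk' : k ≠ ⟨l + 1, hl1⟩ := fun h => hk (congrArg Fin.val h)
    simp [sizeAt, hdag, hkl, hk, hk']

theorem dagger_isMultiPartition_and_avecGT_general {r n : ℕ} (lam : MultiComp r)
    (hsize : lam.totalSize = n)
    (l : Fin r) (hl : lam.sizeAt l ≠ 0)
    (hl1 : (l : ℕ) + 1 < r)
    (dag : MultiComp r)
    (hdag : ∀ j : Fin r,
      dag j =
        if j = l then List.replicate (lam.sizeAt l - 1) 1
        else if (j : ℕ) = (l : ℕ) + 1 then List.replicate (lam.sizeAt j + 1) 1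
        else List.replicate (lam.sizeAt j) 1) :
    dag.IsMultiPartition ∧ dag.totalSize = n ∧ lam.AvecGT dag := by
  have hmove := boxMove_dagger hl hl1 hdag
  refine ⟨fun j => ?_, hmove.totalSize_eq.trans hsize,
    hmove.avecGT (Fin.mk_lt_mk.2 (Nat.lt_succ_self l))⟩
  rw [hdag j]
  split_ifs <;> exact List.pairwise_replicate_of_refl

/-- Let `λ` be an `r`-partition of `n` such that `(λ,1) ∈ Ω`,
i.e. there exists an `r`-composition `μ` (of `n`) with `𝐚(λ) > 𝐚(μ)`.  Let `l`
be the smallest index with `|λ^(l)| ≠ 0` (the Ω-condition forces `l + 1 < r`,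
which we record as a hypothesis), and let `λ†` be defined by
`λ†^(l) = (1^{|λ^(l)|−1})`, `λ†^(l+1) = (1^{|λ^(l+1)|+1})` and
`λ†^(j) = (1^{|λ^(j)|})` for `j ≠ l, l+1`.  Then `λ†` is an `r`-partition of `n`
and `𝐚(λ) > 𝐚(λ†)`. -/
theorem dagger_isMultiPartition_and_avecGT {r n : ℕ} (lam : MultiComp r)
    (hpart : lam.IsMultiPartition) (hsize : lam.totalSize = n)
    (hΩ : ∃ mu : MultiComp r, mu.totalSize = n ∧ lam.AvecGT mu)
    (l : Fin r) (hl : lam.sizeAt l ≠ 0) (hlmin : ∀ k, lam.sizeAt k ≠ 0 → l ≤ k)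
    (hl1 : (l : ℕ) + 1 < r)
    (dag : MultiComp r)
    (hdag : ∀ j : Fin r,
      dag j =
        if j = l then List.replicate (lam.sizeAt l - 1) 1
        else if (j : ℕ) = (l : ℕ) + 1 then List.replicate (lam.sizeAt j + 1) 1
        else List.replicate (lam.sizeAt j) 1) :
    dag.IsMultiPartition ∧ dag.totalSize = n ∧ lam.AvecGT dag :=
  dagger_isMultiPartition_and_avecGT_general lam hsize l hl hl1 dag hdag
end

section
/- Let A be a standardly based R-algebra on a poset Λ over a field R, let λ ∈ Λ, and suppose the bilinear form ⟨·,·⟩ on the cell module Z^λ is nonzero. Then rad Z^λ is the unique maximal proper A-submodule of Z^λ, and L^λ = Z^λ / rad Z^λ is an absolutely irreducible A-module. -/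
open Finset

/-- A **standardly based algebra** on a poset `Λ` in the sense of Du–Rui:
an `R`-algebra `A` equipped with a basis
`⋃_{λ∈Λ} {a^λ_{ij} : (i,j) ∈ I(λ) × J(λ)}` such that one-sided multiplication
is triangular modulo the span `A(>λ)` of basis elements of strictly larger
index, with structure constants independent of the other tableau. -/
structure StandardlyBasedAlgebra (R : Type*) [CommRing R] (A : Type*) [Ring A]
    [Algebra R A] (Λ : Type*) [PartialOrder Λ] where
  /-- the index set `I(λ)` -/
  I : Λ → Type*
  /-- the index set `J(λ)` -/
  J : Λ → Type*
  [finI : ∀ l, Fintype (I l)]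
  [finJ : ∀ l, Fintype (J l)]
  /-- the standard basis `a^λ_{ij}` -/
  bas : Module.Basis (Σ l : Λ, I l × J l) R A
  /-- left structure constants `f_{i',λ}(a,i)` -/
  fL : A → ∀ l : Λ, I l → I l → R
  /-- right structure constants `f_{λ,j'}(j,a)` -/
  fR : ∀ l : Λ, J l → A → J l → R
  /-- `a · a^λ_{ij} ≡ Σ_{i'} f_{i',λ}(a,i) a^λ_{i'j} mod A(>λ)`,
  with coefficients independent of `j`. -/
  left_rule : ∀ (a : A) (l : Λ) (i : I l) (j : J l),
    a * bas ⟨l, (i, j)⟩ - ∑ i' : I l, fL a l i i' • bas ⟨l, (i', j)⟩ ∈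
      Submodule.span R {x : A | ∃ m : Λ, l < m ∧ ∃ i'' j'', x = bas ⟨m, (i'', j'')⟩}
  /-- `a^λ_{ij} · a ≡ Σ_{j'} f_{λ,j'}(j,a) a^λ_{ij'} mod A(>λ)`,
  with coefficients independent of `i`. -/
  right_rule : ∀ (a : A) (l : Λ) (i : I l) (j : J l),
    bas ⟨l, (i, j)⟩ * a - ∑ j' : J l, fR l j a j' • bas ⟨l, (i, j')⟩ ∈
      Submodule.span R {x : A | ∃ m : Λ, l < m ∧ ∃ i'' j'', x = bas ⟨m, (i'', j'')⟩}
  /-- the bilinear structure function `f_λ : J(λ) × I(λ) → R`, determined by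
  `a^λ_{ij} a^λ_{i'j'} ≡ f_λ(j,i') a^λ_{ij'} mod A(>λ)`. -/
  f : ∀ l : Λ, J l → I l → R
  f_rule : ∀ (l : Λ) (i : I l) (j : J l) (i' : I l) (j' : J l),
    bas ⟨l, (i, j)⟩ * bas ⟨l, (i', j')⟩ - f l j i' • bas ⟨l, (i, j')⟩ ∈
      Submodule.span R {x : A | ∃ m : Λ, l < m ∧ ∃ i'' j'', x = bas ⟨m, (i'', j'')⟩}

namespace StandardlyBasedAlgebra

attribute [instance] finI finJ

variable {R : Type*} [CommRing R] {A : Type*} [Ring A] [Algebra R A]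
  {Λ : Type*} [PartialOrder Λ]
variable (D : StandardlyBasedAlgebra R A Λ)

/-- The cell module `Z^λ`: the free `R`-module on `J(λ)` (an element is a
coefficient function `J(λ) → R`). -/
abbrev Cell (l : Λ) := D.J l → R

/-- The right `A`-action on the cell module: `z_j · a = Σ_{j'} f_{λ,j'}(j,a) z_{j'}`. -/
def cellAct {l : Λ} (x : D.Cell l) (a : A) : D.Cell l :=
  fun j' => ∑ j : D.J l, x j * D.fR l j a j'

/-- The bilinear form on the cell module, determined by `⟨z_j, z_{j'}⟩ = f_λ(j, j')`
(via an identification `e` of `J(λ)` with (part of) `I(λ)`). -/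
def cellForm {l : Λ} (e : D.J l → D.I l) (x y : D.Cell l) : R :=
  ∑ j : D.J l, ∑ j' : D.J l, x j * y j' * D.f l j (e j')

/-- The radical `rad Z^λ = {x : ⟨x,y⟩ = 0 for all y}` of the bilinear form on `Z^λ`. -/
def cellRad (l : Λ) (e : D.J l → D.I l) : Set (D.Cell l) :=
  {x | ∀ y : D.Cell l, D.cellForm e x y = 0}

/-- A subset of the cell module that is a (right) `A`-submodule: closed under
zero, addition, `R`-scalars and the `A`-action. -/
def IsCellSubmodule {l : Λ} (N : Set (D.Cell l)) : Prop :=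
  (0 : D.Cell l) ∈ N ∧ (∀ x ∈ N, ∀ y ∈ N, x + y ∈ N) ∧
    (∀ (c : R), ∀ x ∈ N, c • x ∈ N) ∧ ∀ x ∈ N, ∀ a : A, D.cellAct x a ∈ N

end StandardlyBasedAlgebra

/-!
Write `⟪x, i⟫ = ∑ⱼ x j f_λ(j, i)` for the pairing of `x ∈ Z^λ` with `i ∈ I(λ)`.
Comparing the right rule for `a = a^λ_{ij₀}` with the multiplication rule `f_λ` modulo
`A(>λ)` shows `x · a^λ_{ij₀} = ⟪x, i⟫ z_{j₀}`.  Hence an element `x` with `⟪x, i⟫ ≠ 0`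
generates `Z^λ`, and every `x ∉ rad Z^λ` has such an `i`: any proper submodule lies in the
radical, which is proper because the form is nonzero.  In the quotient, an endomorphism `φ`
commuting with the action is fixed by `φ(x) = u` for one such `x`; applying `a^λ_{ij₀}` gives
`⟪x, i⟫ φ(z_{j₀}) = ⟪u, i⟫ z_{j₀}`, so `φ` is the scalar `⟪u, i⟫ / ⟪x, i⟫`.
-/

namespace StandardlyBasedAlgebra

section CommRing

variable {R : Type*} [CommRing R] {A : Type*} [Ring A] [Algebra R A]
  {Λ : Type*} [PartialOrder Λ] (D : StandardlyBasedAlgebra R A Λ)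

/-- Du–Rui's `A(>λ)`. -/
def above (l : Λ) : Submodule R A :=
  Submodule.span R {x : A | ∃ m : Λ, l < m ∧ ∃ i'' j'', x = D.bas ⟨m, (i'', j'')⟩}

def cellPairing {l : Λ} (x : D.Cell l) (i : D.I l) : R :=
  ∑ j : D.J l, x j * D.f l j i

lemma bas_repr_eq_zero_of_mem_above {l : Λ} {a : A} (ha : a ∈ D.above l)
    (i : D.I l) (j : D.J l) : D.bas.repr a ⟨l, (i, j)⟩ = 0 := by
  have hle : D.above l ≤ LinearMap.ker (D.bas.coord ⟨l, (i, j)⟩) := by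
    refine Submodule.span_le.mpr ?_
    rintro _ ⟨m, hlm, i', j', rfl⟩
    have hne : (⟨m, (i', j')⟩ : Σ l : Λ, D.I l × D.J l) ≠ ⟨l, (i, j)⟩ :=
      fun h => hlm.ne' (congrArg Sigma.fst h)
    simp [Finsupp.single_eq_of_ne hne.symm]
  exact hle ha

lemma fR_bas {l : Λ} [DecidableEq (D.J l)] (i : D.I l) (j j₀ j' : D.J l) :
    D.fR l j (D.bas ⟨l, (i, j₀)⟩) j' = if j₀ = j' then D.f l j i else 0 := by
  have hdiff := (D.above l).sub_mem (D.f_rule l i j i j₀) (D.right_rule (D.bas ⟨l, (i, j₀)⟩) l i j)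
  have h := D.bas_repr_eq_zero_of_mem_above hdiff i j'
  classical
  simpa [Finsupp.single_apply, sub_eq_zero] using h

lemma cellAct_bas {l : Λ} [DecidableEq (D.J l)] (x : D.Cell l) (i : D.I l) (j₀ : D.J l) :
    D.cellAct x (D.bas ⟨l, (i, j₀)⟩) = D.cellPairing x i • Pi.single j₀ 1 := by
  funext j'
  simp [cellAct, cellPairing, fR_bas, Pi.single_apply, eq_comm]

lemma cellForm_eq_sum_cellPairing {l : Λ} (e : D.J l → D.I l) (x y : D.Cell l) :
    D.cellForm e x y = ∑ j' : D.J l, y j' * D.cellPairing x (e j') := by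
  simp only [cellForm, cellPairing, Finset.mul_sum]
  rw [Finset.sum_comm]
  exact Finset.sum_congr rfl fun _ _ => Finset.sum_congr rfl fun _ _ => by ring

lemma exists_cellPairing_ne_zero_of_notMem_cellRad {l : Λ} {e : D.J l → D.I l}
    {x : D.Cell l} (hx : x ∉ D.cellRad l e) : ∃ j, D.cellPairing x (e j) ≠ 0 := by
  obtain ⟨y, hy⟩ : ∃ y, D.cellForm e x y ≠ 0 := by simpa [cellRad] using hx
  by_contra! h
  simp [cellForm_eq_sum_cellPairing, h] at hy

variable {D}

def IsCellSubmodule.toSubmodule {l : Λ} {N : Set (D.Cell l)} (hN : D.IsCellSubmodule N) :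
    Submodule R (D.Cell l) where
  carrier := N
  zero_mem' := hN.1
  add_mem' := fun hx hy => hN.2.1 _ hx _ hy
  smul_mem' := hN.2.2.1

lemma isCellSubmodule_preimage {l : Λ} {L : Type*} [AddCommGroup L] [Module R L]
    (p : D.Cell l →ₗ[R] L) (act : L → A → L)
    (hact : ∀ x a, act (p x) a = p (D.cellAct x a)) {N' : Set L}
    (hN' : (0 : L) ∈ N' ∧ (∀ x ∈ N', ∀ y ∈ N', x + y ∈ N') ∧
      (∀ (c : R), ∀ x ∈ N', c • x ∈ N') ∧ (∀ x ∈ N', ∀ a : A, act x a ∈ N')) :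
    D.IsCellSubmodule (p ⁻¹' N') := by
  obtain ⟨h0, hadd, hsmul, hactN⟩ := hN'
  refine ⟨?_, fun x hx y hy => ?_, fun c x hx => ?_, fun x hx a => ?_⟩
  · simpa using h0
  · simpa using hadd _ hx _ hy
  · simpa using hsmul c _ hx
  · simpa [Set.mem_preimage, ← hact] using hactN _ hx a

end CommRing

variable {R : Type*} [Field R] {A : Type*} [Ring A] [Algebra R A]
  {Λ : Type*} [PartialOrder Λ] {D : StandardlyBasedAlgebra R A Λ}

lemma IsCellSubmodule.eq_univ_of_cellPairing_ne_zero {l : Λ} {N : Set (D.Cell l)}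
    (hN : D.IsCellSubmodule N) {x : D.Cell l} (hx : x ∈ N) {i : D.I l}
    (hi : D.cellPairing x i ≠ 0) : N = Set.univ := by
  classical
  refine Set.eq_univ_of_forall fun w => ?_
  have hw : w = ∑ j₀, (w j₀ / D.cellPairing x i) • D.cellAct x (D.bas ⟨l, (i, j₀)⟩) := by
    simp_rw [cellAct_bas, smul_smul, div_mul_cancel₀ _ hi]
    exact pi_eq_sum_univ' w
  rw [hw]
  exact hN.toSubmodule.sum_mem fun j₀ _ => hN.toSubmodule.smul_mem _ (hN.2.2.2 x hx _)

lemma IsCellSubmodule.subset_cellRad {l : Λ} {N : Set (D.Cell l)}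
    (hN : D.IsCellSubmodule N) (hN_ne : N ≠ Set.univ) (e : D.J l → D.I l) :
    N ⊆ D.cellRad l e := by
  intro x hx
  by_contra hrad
  obtain ⟨j, hj⟩ := D.exists_cellPairing_ne_zero_of_notMem_cellRad hrad
  exact hN_ne (hN.eq_univ_of_cellPairing_ne_zero hx hj)

section Quotient

variable {l : Λ} {L : Type*} [AddCommGroup L] [Module R L] {p : D.Cell l →ₗ[R] L}
  {act : L → A → L}

lemma eq_zero_or_univ_of_ker_eq_cellRad (hp : Function.Surjective p) {e : D.J l → D.I l}
    (hker : ∀ x, p x = 0 ↔ x ∈ D.cellRad l e) (hact : ∀ x a, act (p x) a = p (D.cellAct x a))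
    {N' : Set L}
    (hN' : (0 : L) ∈ N' ∧ (∀ x ∈ N', ∀ y ∈ N', x + y ∈ N') ∧
      (∀ (c : R), ∀ x ∈ N', c • x ∈ N') ∧ (∀ x ∈ N', ∀ a : A, act x a ∈ N')) :
    N' = {0} ∨ N' = Set.univ := by
  have hpre := isCellSubmodule_preimage p act hact hN'
  by_cases huniv : p ⁻¹' N' = Set.univ
  · exact Or.inr (by rw [← Set.image_preimage_eq N' hp, huniv, Set.image_univ, hp.range_eq])
  · refine Or.inl (Set.eq_singleton_iff_unique_mem.mpr ⟨hN'.1, fun y hy => ?_⟩)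
    obtain ⟨x, rfl⟩ := hp y
    exact (hker x).mpr (hpre.subset_cellRad huniv e hy)

lemma exists_eq_smul_of_commute_act (hp : Function.Surjective p)
    (hact : ∀ x a, act (p x) a = p (D.cellAct x a)) {x₀ : D.Cell l} {i : D.I l}
    (hx₀ : D.cellPairing x₀ i ≠ 0) (φ : L →ₗ[R] L) (hφ : ∀ y a, φ (act y a) = act (φ y) a) :
    ∃ c : R, ∀ y, φ y = c • y := by
  classical
  obtain ⟨u, hu⟩ := hp (φ (p x₀))
  set c := D.cellPairing u i / D.cellPairing x₀ i with hc
  have hbasis : ∀ j₀, φ (p (Pi.single j₀ 1)) = c • p (Pi.single j₀ 1) := by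
    intro j₀
    have h : D.cellPairing x₀ i • φ (p (Pi.single j₀ 1)) =
        D.cellPairing u i • p (Pi.single j₀ 1) := by
      calc _ = φ (act (p x₀) (D.bas ⟨l, (i, j₀)⟩)) := by rw [hact, cellAct_bas, map_smul, map_smul]
        _ = act (p u) (D.bas ⟨l, (i, j₀)⟩) := by rw [hφ, hu]
        _ = _ := by rw [hact, cellAct_bas, map_smul]
    rw [hc, div_eq_inv_mul, mul_smul, ← h, smul_smul, inv_mul_cancel₀ hx₀, one_smul]
  have hcomp : φ ∘ₗ p = c • p := by
    ext j₀
    simpa using hbasis j₀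
  refine ⟨c, fun y => ?_⟩
  obtain ⟨x, rfl⟩ := hp y
  exact LinearMap.congr_fun hcomp x

end Quotient

end StandardlyBasedAlgebra

/-- Let `A` be a standardly based algebra on a poset `Λ` over a
field `R`, `λ ∈ Λ`, and suppose the bilinear form on the cell module `Z^λ` is
nonzero.  Then `rad Z^λ` is the unique maximal proper `A`-submodule of `Z^λ`,
and `L^λ = Z^λ / rad Z^λ` is an absolutely irreducible `A`-module (nonzero,
irreducible, with only scalar endomorphisms). -/
theorem cellRad_unique_maximal_and_quotient_absolutely_irreducible
    {R : Type*} [Field R] {A : Type*} [Ring A] [Algebra R A]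
    {Λ : Type*} [PartialOrder Λ]
    (D : StandardlyBasedAlgebra R A Λ) (l : Λ) (e : D.J l → D.I l)
    (hform : ∃ x y : D.Cell l, D.cellForm e x y ≠ 0) :
    D.cellRad l e ≠ Set.univ ∧
    (∀ N : Set (D.Cell l), D.IsCellSubmodule N → N ≠ Set.univ → N ⊆ D.cellRad l e) ∧
    -- `L^λ = Z^λ / rad Z^λ` is absolutely irreducible: for any realization of the
    -- quotient as an `R`-module with compatible `A`-action, it is nonzero, has no
    -- proper nonzero `A`-stable subspaces, and all `A`-endomorphisms are scalars.
    (∀ (L : Type*) [AddCommGroup L] [Module R L]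
      (p : (D.Cell l) →ₗ[R] L), Function.Surjective p →
      (∀ x : D.Cell l, p x = 0 ↔ x ∈ D.cellRad l e) →
      ∀ (act : L → A → L), (∀ (x : D.Cell l) (a : A), act (p x) a = p (D.cellAct x a)) →
      Nontrivial L ∧
      (∀ N' : Set L,
        ((0 : L) ∈ N' ∧ (∀ x ∈ N', ∀ y ∈ N', x + y ∈ N') ∧
          (∀ (c : R), ∀ x ∈ N', c • x ∈ N') ∧ (∀ x ∈ N', ∀ a : A, act x a ∈ N')) →
        N' = {0} ∨ N' = Set.univ) ∧
      (∀ φ : L →ₗ[R] L, (∀ (y : L) (a : A), φ (act y a) = act (φ y) a) →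
        ∃ c : R, ∀ y : L, φ y = c • y)) := by
  obtain ⟨x₀, y₀, hxy⟩ := hform
  have hx₀ : x₀ ∉ D.cellRad l e := fun h => hxy (h y₀)
  obtain ⟨j, hj⟩ := D.exists_cellPairing_ne_zero_of_notMem_cellRad hx₀
  refine ⟨fun h => hx₀ (h ▸ Set.mem_univ x₀), fun N hN hne => hN.subset_cellRad hne e, ?_⟩
  intro L _ _ p hp hker act hact
  exact ⟨⟨p x₀, 0, fun h => hx₀ ((hker x₀).mp h)⟩,
    fun N' hN' => StandardlyBasedAlgebra.eq_zero_or_univ_of_ker_eq_cellRad hp hker hact hN',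
    StandardlyBasedAlgebra.exists_eq_smul_of_commute_act hp hact hj⟩
end
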